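/- arXiv:2008.01327 — 4 statements merged into one kernel-verified Lean document; each statement's English description precedes it below -/
import Mathlib

section
/- Let n ≥ 1 and let i, j ∈ {0, …, 2^n − 1} with j − i ∉ {0, 2^(n−1), −2^(n−1)}. Then odd((j − i) + 2^n) ≡ odd(j − i) (mod 4) and odd((j − i) − 2^n) ≡ odd(j − i) (mod 4). -/
/-- For a nonzero integer `z`, `oddPart z` is `z` divided by the largest power of 2 dividing `z`. -/
def oddPart (z : ℤ) : ℤ := z / 2 ^ (z.natAbs.factorization 2)

lemma oddPart_pow_mul (a : ℕ) (m : ℤ) (hm : Odd m) :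
    oddPart (2 ^ a * m) = m := by
  have hm0 : m ≠ 0 := by rintro rfl; simp [Int.odd_iff] at hm
  have hnat : ((2:ℤ) ^ a * m).natAbs = 2 ^ a * m.natAbs := by
    simp [Int.natAbs_mul, Int.natAbs_pow]
  have hmodd : Odd m.natAbs := Int.natAbs_odd.mpr hm
  have hnd : ¬ (2 ∣ m.natAbs) := by
    have := Nat.odd_iff.mp hmodd
    omega
  have hfact : ((2:ℤ) ^ a * m).natAbs.factorization 2 = a := by
    rw [hnat, Nat.factorization_mul (by positivity) (Int.natAbs_ne_zero.mpr hm0)]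
    simp [Nat.Prime.factorization_pow Nat.prime_two,
      Nat.factorization_eq_zero_of_not_dvd hnd]
  rw [oddPart, hfact]
  exact Int.mul_ediv_cancel_left _ (by positivity)

theorem stmt_1 (n : ℕ) (hn : 1 ≤ n) (i j : ℤ)
    (hi : 0 ≤ i) (hi' : i ≤ 2 ^ n - 1) (hj : 0 ≤ j) (hj' : j ≤ 2 ^ n - 1)
    (h0 : j - i ≠ 0) (h1 : j - i ≠ 2 ^ (n - 1)) (h2 : j - i ≠ -2 ^ (n - 1)) :
    oddPart ((j - i) + 2 ^ n) ≡ oddPart (j - i) [ZMOD 4] ∧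
    oddPart ((j - i) - 2 ^ n) ≡ oddPart (j - i) [ZMOD 4] := by
  set d : ℤ := j - i with hd
  set a : ℕ := d.natAbs.factorization 2 with ha
  have hdabs0 : d.natAbs ≠ 0 := Int.natAbs_ne_zero.mpr h0
  have hdvd : (2:ℤ) ^ a ∣ d := by
    have h := Nat.ordProj_dvd d.natAbs 2
    have h' : ((2:ℤ) ^ a) ∣ (d.natAbs : ℤ) := by exact_mod_cast Int.natCast_dvd_natCast.mpr h
    exact Int.dvd_natAbs.mp h'
  obtain ⟨m, hdm⟩ := hdvd
  have hm0 : m ≠ 0 := by rintro rfl; simp [hdm] at h0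
  have hmodd : Odd m := by
    rw [← Int.not_even_iff_odd, even_iff_two_dvd]
    rintro ⟨k, rfl⟩
    have : (2:ℤ) ^ (a + 1) ∣ d := ⟨k, by rw [hdm]; ring⟩
    have h2d : 2 ^ (a + 1) ∣ d.natAbs := by
      have h' := Int.natAbs_dvd_natAbs.mpr this
      rw [Int.natAbs_pow] at h'
      exact_mod_cast h'
    exact Nat.pow_succ_factorization_not_dvd hdabs0 Nat.prime_two h2d
  -- bound |d| ≤ 2^n - 1
  have habs : (d.natAbs : ℤ) ≤ 2 ^ n - 1 := by
    rcases Int.natAbs_eq d with h | h <;> omega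
  have habsn : d.natAbs < 2 ^ n := by
    have : ((2:ℤ) ^ n) = ((2 ^ n : ℕ) : ℤ) := by push_cast; ring
    omega
  have haltn : a < n := by
    have h1 : 2 ^ a ≤ d.natAbs := Nat.ordProj_le 2 hdabs0
    exact (Nat.pow_lt_pow_iff_right (by norm_num)).mp (lt_of_le_of_lt h1 habsn)
  -- a ≤ n - 2
  have han : a + 2 ≤ n := by
    by_contra hc
    have hae : a = n - 1 := by omega
    -- then |m| = 1
    have hmabs : m.natAbs = 1 := by
      have h1' : 2 ^ a * m.natAbs = d.natAbs := by
        rw [hdm, Int.natAbs_mul, Int.natAbs_pow]; rfl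
      have h2' : 2 ^ n = 2 * 2 ^ a := by
        rw [hae]; rw [← pow_succ']; congr 1; omega
      have hm1 : 1 ≤ m.natAbs := Nat.one_le_iff_ne_zero.mpr (Int.natAbs_ne_zero.mpr hm0)
      have hlt : m.natAbs < 2 := by nlinarith [Nat.one_le_two_pow (n := a)]
      omega
    rcases Int.natAbs_eq_iff.mp hmabs with h | h
    · exact h1 (by rw [hdm, h, hae]; ring)
    · exact h2 (by rw [hdm, h, hae]; ring)
  have hsplit : (2:ℤ) ^ n = 2 ^ a * 2 ^ (n - a) := by
    rw [← pow_add]; congr 1; omega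
  have h4dvd : (4:ℤ) ∣ 2 ^ (n - a) := by
    have : (2:ℤ) ^ (n - a) = 4 * 2 ^ (n - a - 2) := by
      rw [show (4:ℤ) = 2 ^ 2 by norm_num, ← pow_add]; congr 1; omega
    exact ⟨_, this⟩
  have hev : Even ((2:ℤ) ^ (n - a)) := by
    rcases h4dvd with ⟨k, hk⟩; exact ⟨2 * k, by omega⟩
  have hop : oddPart d = m := by rw [hdm]; exact oddPart_pow_mul a m hmodd
  constructor
  · have he : d + 2 ^ n = 2 ^ a * (m + 2 ^ (n - a)) := by rw [hdm, hsplit]; ring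
    rw [he, oddPart_pow_mul a _ (hmodd.add_even hev), hop]
    refine Int.modEq_iff_dvd.mpr ?_
    rw [show m - (m + 2 ^ (n - a)) = -(2 ^ (n - a)) by ring]
    exact dvd_neg.mpr h4dvd
  · have he : d - 2 ^ n = 2 ^ a * (m - 2 ^ (n - a)) := by rw [hdm, hsplit]; ring
    rw [he, oddPart_pow_mul a _ (hmodd.sub_even hev), hop]
    refine Int.modEq_iff_dvd.mpr ?_
    rw [show m - (m - 2 ^ (n - a)) = 2 ^ (n - a) by ring]
    exact h4dvd
end

section
/- Let n ≥ 1, and for i, j ∈ {1, …, 2^n} say i dominates j if odd(j − i) ≡ 1 (mod 4). Then every i ∈ {1, …, 2^(n−1)} dominates exactly 2^(n−1) elements of {1, …, 2^n} and is dominated by exactly 2^(n−1) − 1 elements, and every i ∈ {2^(n−1)+1, …, 2^n} dominates exactly 2^(n−1) − 1 elements and is dominated by exactly 2^(n−1) elements. -/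
open scoped Classical

/-- `i` dominates `j` iff `odd (j - i) ≡ 1 (mod 4)`. -/
def Dominates (i j : ℤ) : Prop := oddPart (j - i) ≡ 1 [ZMOD 4]

/-
Moving `i` to `i + 1` slides the window of differences `j - i` by one, so the out-degree changes
only through the two boundary vertices `0` and `2 ^ n`. Unless `i` is the midpoint `2 ^ (n - 1)`,
its `2`-adic valuation is at most `n - 2`, so adding `2 ^ n` to `-i` does not change its odd part
mod 4, and `i` dominates `2 ^ n` exactly when it dominates `0`. Hence the out-degree is constant
on each half and drops by one across the midpoint. Since `odd (-z) = -odd z`, domination is a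
tournament, so out- and in-degree add up to `2 ^ n - 1`; the reflection `j ↦ 2 ^ n + 1 - j`
reverses it, so the in-degree of `1` is the out-degree of `2 ^ n`. Together these determine the
out-degree `2 ^ (n - 1)` on the lower half.
-/

open Finset

lemma oddPart_eq_ediv_padicValInt (z : ℤ) : oddPart z = z / 2 ^ padicValInt 2 z := by
  rw [oddPart, padicValInt, Nat.factorization_def _ Nat.prime_two]

lemma two_pow_padicValInt_mul_oddPart (z : ℤ) : 2 ^ padicValInt 2 z * oddPart z = z := by
  rw [oddPart_eq_ediv_padicValInt]
  exact Int.mul_ediv_cancel' (by exact_mod_cast padicValInt_dvd z)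

lemma odd_oddPart {z : ℤ} (hz : z ≠ 0) : Odd (oddPart z) := by
  rw [← Int.not_even_iff_odd, even_iff_two_dvd]
  rintro ⟨c, hc⟩
  have hz' := two_pow_padicValInt_mul_oddPart z
  rw [hc] at hz'
  have hdvd : (2 : ℤ) ^ (padicValInt 2 z + 1) ∣ z := ⟨c, by linear_combination -hz'⟩
  exact Nat.not_succ_le_self _
    (((padicValInt_dvd_iff (p := 2) _ z).mp (by exact_mod_cast hdvd)).resolve_left hz)

lemma padicValInt_two_pow_mul {m : ℤ} (hm : Odd m) (k : ℕ) : padicValInt 2 (2 ^ k * m) = k := by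
  have hm0 : m ≠ 0 := by rintro rfl; simp at hm
  have hm2 : ¬ (2 : ℤ) ∣ m := by rwa [← even_iff_two_dvd, Int.not_even_iff_odd]
  rw [padicValInt.mul (by positivity) hm0,
    padicValInt.eq_zero_of_not_dvd (p := 2) (z := m) (by exact_mod_cast hm2)]
  simp [padicValInt]

lemma oddPart_two_pow_mul {m : ℤ} (hm : Odd m) (k : ℕ) : oddPart (2 ^ k * m) = m := by
  rw [oddPart_eq_ediv_padicValInt, padicValInt_two_pow_mul hm,
    Int.mul_ediv_cancel_left _ (by positivity)]

lemma oddPart_neg (z : ℤ) : oddPart (-z) = -oddPart z := by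
  rcases eq_or_ne z 0 with rfl | hz
  · simp [oddPart]
  conv_lhs => rw [← two_pow_padicValInt_mul_oddPart z, ← mul_neg]
  exact oddPart_two_pow_mul (odd_oddPart hz).neg _

lemma oddPart_add_modEq {z e : ℤ} (hz : z ≠ 0) (he : 2 ^ (padicValInt 2 z + 2) ∣ e) :
    oddPart (z + e) ≡ oddPart z [ZMOD 4] := by
  obtain ⟨c, rfl⟩ := he
  have hsum : z + 2 ^ (padicValInt 2 z + 2) * c = 2 ^ padicValInt 2 z * (oddPart z + 4 * c) := by
    linear_combination -two_pow_padicValInt_mul_oddPart z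
  rw [hsum, oddPart_two_pow_mul ((odd_oddPart hz).add_even ⟨2 * c, by ring⟩)]
  exact Int.add_mul_emod_self_left _ _ _

lemma neg_modEq_one_four_iff {m : ℤ} (hm : Odd m) : -m ≡ 1 [ZMOD 4] ↔ ¬ m ≡ 1 [ZMOD 4] := by
  obtain ⟨k, rfl⟩ := hm
  simp only [Int.ModEq]
  omega

lemma dominates_add_add_iff (i j t : ℤ) : Dominates (i + t) (j + t) ↔ Dominates i j := by
  simp only [Dominates, add_sub_add_right_eq_sub]

lemma dominates_sub_sub_iff (c i j : ℤ) : Dominates (c - j) (c - i) ↔ Dominates i j := by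
  simp only [Dominates, sub_sub_sub_cancel_left]

lemma not_dominates_self (i : ℤ) : ¬ Dominates i i := by
  simp [Dominates, oddPart, Int.ModEq]

lemma dominates_comm_iff_not {i j : ℤ} (hij : i ≠ j) : Dominates j i ↔ ¬ Dominates i j := by
  rw [Dominates, Dominates, ← neg_sub, oddPart_neg]
  exact neg_modEq_one_four_iff (odd_oddPart (sub_ne_zero.mpr hij.symm))

lemma dominates_two_pow_iff {n : ℕ} {i : ℤ} (h0 : 0 < i) (hlt : i < 2 ^ (n + 1))
    (hmid : i ≠ 2 ^ n) : Dominates i (2 ^ (n + 1)) ↔ Dominates i 0 := by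
  have hval : padicValInt 2 i < n := by
    by_contra! hle
    obtain ⟨c, rfl⟩ := ((padicValInt_dvd_iff (p := 2) n i).mpr (Or.inr hle))
    rw [Nat.cast_ofNat] at h0 hlt hmid
    have hc0 : 0 < c := pos_of_mul_pos_right h0 (by positivity)
    have hc2 : c < 2 := by
      rw [pow_succ] at hlt
      exact lt_of_mul_lt_mul_left hlt (by positivity)
    exact hmid (by norm_num [show c = 1 by omega])
  have hdvd : (2 : ℤ) ^ (padicValInt 2 (-i) + 2) ∣ 2 ^ (n + 1) := by
    rw [show padicValInt 2 (-i) = padicValInt 2 i by simp [padicValInt]]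
    exact pow_dvd_pow 2 (by omega)
  have hmod := oddPart_add_modEq (neg_ne_zero.mpr h0.ne') hdvd
  simp only [Dominates, zero_sub, Int.ModEq] at hmod ⊢
  rw [sub_eq_neg_add, hmod]

lemma card_filter_Icc_add (P : ℤ → Prop) [DecidablePred P] (a b t : ℤ) :
    #{x ∈ Icc (a + t) (b + t) | P x} = #{x ∈ Icc a b | P (x + t)} := by
  rw [← map_add_right_Icc, filter_map, card_map]
  rfl

lemma card_filter_Icc_add_one_add (P : ℤ → Prop) [DecidablePred P] {a b : ℤ} (h : a ≤ b + 1) :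
    #{x ∈ Icc (a + 1) (b + 1) | P x} + (if P a then 1 else 0)
      = #{x ∈ Icc a b | P x} + (if P (b + 1) then 1 else 0) := by
  have card_insert_filter : ∀ (s : Finset ℤ) x, x ∉ s →
      #{y ∈ insert x s | P y} = #{y ∈ s | P y} + if P x then 1 else 0 := by
    intro s x hx
    rw [filter_insert]
    split_ifs
    · exact card_insert_of_notMem (fun hmem => hx (mem_filter.mp hmem).1)
    · rfl
  rw [← card_insert_filter _ _ (by simp), ← card_insert_filter _ _ (by simp),
    insert_Icc_add_one_left_eq_Icc h, insert_Icc_right_eq_Icc_add_one h]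

noncomputable def outDegree (n : ℕ) (i : ℤ) : ℕ := #{j ∈ Icc 1 (2 ^ n) | Dominates i j}

noncomputable def inDegree (n : ℕ) (i : ℤ) : ℕ := #{j ∈ Icc 1 (2 ^ n) | Dominates j i}

lemma outDegree_add_inDegree {n : ℕ} {i : ℤ} (hi : i ∈ Icc 1 (2 ^ n)) :
    outDegree n i + inDegree n i = 2 ^ n - 1 := by
  have herase : ∀ p : ℤ → Prop, ¬ p i →
      #{j ∈ Icc 1 (2 ^ n) | p j} = #{j ∈ (Icc 1 (2 ^ n)).erase i | p j} := fun p hp => by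
    rw [filter_erase, erase_eq_of_notMem (by simp [hp])]
  have hin : #{j ∈ (Icc 1 (2 ^ n)).erase i | Dominates j i}
      = #{j ∈ (Icc 1 (2 ^ n)).erase i | ¬ Dominates i j} :=
    congrArg card (filter_congr fun j hj => dominates_comm_iff_not (mem_erase.mp hj).1.symm)
  have hcard : ((2 : ℤ) ^ n + 1 - 1).toNat = 2 ^ n := by rw [add_sub_cancel_right]; norm_cast
  rw [outDegree, inDegree, herase _ (not_dominates_self i), herase (Dominates · i)
    (not_dominates_self i), hin, card_filter_add_card_filter_not, card_erase_of_mem hi,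
    Int.card_Icc, hcard]

lemma inDegree_eq_outDegree (n : ℕ) (i : ℤ) : inDegree n i = outDegree n (2 ^ n + 1 - i) := by
  refine card_nbij' (2 ^ n + 1 - ·) (2 ^ n + 1 - ·) (fun j hj => ?_) (fun j hj => ?_)
    (fun j _ => sub_sub_cancel _ _) (fun j _ => sub_sub_cancel _ _)
  · simp only [mem_coe, mem_filter, mem_Icc] at hj ⊢
    exact ⟨by omega, (dominates_sub_sub_iff _ _ _).mpr hj.2⟩
  · simp only [mem_coe, mem_filter, mem_Icc] at hj ⊢
    have hrefl := dominates_sub_sub_iff (2 ^ n + 1) (2 ^ n + 1 - j) i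
    rw [sub_sub_cancel] at hrefl
    exact ⟨by omega, hrefl.mp hj.2⟩

lemma outDegree_add_one (n : ℕ) (i : ℤ) :
    outDegree n (i + 1) = #{j ∈ Icc 0 (2 ^ n - 1) | Dominates i j} := by
  rw [outDegree, show Icc (1 : ℤ) (2 ^ n) = Icc (0 + 1) (2 ^ n - 1 + 1) by simp,
    card_filter_Icc_add]
  simp only [dominates_add_add_iff]

lemma outDegree_add_one_add (n : ℕ) (i : ℤ) :
    outDegree n (i + 1) + (if Dominates i (2 ^ n) then 1 else 0)
      = outDegree n i + (if Dominates i 0 then 1 else 0) := by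
  have hslide := card_filter_Icc_add_one_add (Dominates i) (a := 0) (b := 2 ^ n - 1)
    (by rw [sub_add_cancel]; positivity)
  rw [zero_add, sub_add_cancel] at hslide
  rw [outDegree_add_one]
  exact hslide.symm

lemma Int.eq_of_forall_add_one_eq {α : Type*} {f : ℤ → α} {a b : ℤ}
    (h : ∀ i, a ≤ i → i < b → f (i + 1) = f i) {i : ℤ} (hai : a ≤ i) (hib : i ≤ b) :
    f i = f a := by
  induction i, hai using Int.leInduction with
  | base => rfl
  | succ i hai ih => rw [h i hai (by omega), ih (by omega)]

lemma outDegree_add_one_of_ne {n : ℕ} {i : ℤ} (h0 : 0 < i) (hlt : i < 2 ^ (n + 1))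
    (hmid : i ≠ 2 ^ n) : outDegree (n + 1) (i + 1) = outDegree (n + 1) i := by
  have hstep := outDegree_add_one_add (n + 1) i
  rwa [dominates_two_pow_iff h0 hlt hmid, add_left_inj] at hstep

lemma outDegree_two_pow_add_one (n : ℕ) :
    outDegree (n + 1) (2 ^ n + 1) + 1 = outDegree (n + 1) (2 ^ n) := by
  have hoddPart : oddPart (2 ^ n) = 1 := by simpa using oddPart_two_pow_mul odd_one n
  have hN : Dominates (2 ^ n) (2 ^ (n + 1)) := by
    rw [Dominates, pow_succ, mul_two, add_sub_cancel_right, hoddPart]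
  have h0 : ¬ Dominates (2 ^ n) 0 := by
    rw [dominates_comm_iff_not (by positivity : (0 : ℤ) < 2 ^ n).ne, not_not, Dominates,
      sub_zero, hoddPart]
  have hstep := outDegree_add_one_add (n + 1) (2 ^ n)
  rwa [if_pos hN, if_neg h0, add_zero] at hstep

lemma outDegree_eq_outDegree_one {n : ℕ} {i : ℤ} (h1 : 1 ≤ i) (hi : i ≤ 2 ^ n) :
    outDegree (n + 1) i = outDegree (n + 1) 1 :=
  Int.eq_of_forall_add_one_eq (f := outDegree (n + 1))
    (fun k hk hkn => outDegree_add_one_of_ne (by omega) (by rw [pow_succ]; omega) hkn.ne) h1 hi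

lemma outDegree_eq_outDegree_two_pow_add_one {n : ℕ} {i : ℤ} (h1 : 2 ^ n + 1 ≤ i)
    (hi : i ≤ 2 ^ (n + 1)) : outDegree (n + 1) i = outDegree (n + 1) (2 ^ n + 1) :=
  Int.eq_of_forall_add_one_eq (f := outDegree (n + 1))
    (fun k hk hkn => outDegree_add_one_of_ne (lt_of_lt_of_le (by positivity) hk) hkn (by omega))
    h1 hi

lemma outDegree_one (n : ℕ) : outDegree (n + 1) 1 = 2 ^ n := by
  have hpos : (0 : ℤ) < 2 ^ n := by positivity
  have htotal := outDegree_add_inDegree (n := n + 1) (i := 1)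
    (mem_Icc.mpr ⟨le_rfl, one_le_pow₀ one_le_two⟩)
  have hin : inDegree (n + 1) 1 = outDegree (n + 1) (2 ^ n + 1) := by
    rw [inDegree_eq_outDegree, add_sub_cancel_right,
      outDegree_eq_outDegree_two_pow_add_one (by rw [pow_succ]; omega) le_rfl]
  have hdrop := outDegree_two_pow_add_one n
  rw [outDegree_eq_outDegree_one (one_le_pow₀ one_le_two) le_rfl] at hdrop
  rw [pow_succ] at htotal
  omega

lemma outDegree_of_le_two_pow {n : ℕ} {i : ℤ} (h1 : 1 ≤ i) (hi : i ≤ 2 ^ n) :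
    outDegree (n + 1) i = 2 ^ n := by
  rw [outDegree_eq_outDegree_one h1 hi, outDegree_one]

lemma outDegree_of_two_pow_lt {n : ℕ} {i : ℤ} (h1 : 2 ^ n + 1 ≤ i) (hi : i ≤ 2 ^ (n + 1)) :
    outDegree (n + 1) i = 2 ^ n - 1 := by
  have hdrop := outDegree_two_pow_add_one n
  rw [outDegree_of_le_two_pow (one_le_pow₀ one_le_two) le_rfl] at hdrop
  rw [outDegree_eq_outDegree_two_pow_add_one h1 hi]
  omega

theorem stmt_2 (n : ℕ) (hn : 1 ≤ n) :
    (∀ i ∈ Finset.Icc (1 : ℤ) (2 ^ (n - 1)),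
      ((Finset.Icc (1 : ℤ) (2 ^ n)).filter (fun j => Dominates i j)).card = 2 ^ (n - 1) ∧
      ((Finset.Icc (1 : ℤ) (2 ^ n)).filter (fun j => Dominates j i)).card = 2 ^ (n - 1) - 1) ∧
    (∀ i ∈ Finset.Icc ((2 : ℤ) ^ (n - 1) + 1) (2 ^ n),
      ((Finset.Icc (1 : ℤ) (2 ^ n)).filter (fun j => Dominates i j)).card = 2 ^ (n - 1) - 1 ∧
      ((Finset.Icc (1 : ℤ) (2 ^ n)).filter (fun j => Dominates j i)).card = 2 ^ (n - 1)) := by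
  obtain ⟨n, rfl⟩ := Nat.exists_eq_add_of_le' hn
  rw [Nat.add_sub_cancel]
  have hpos : (0 : ℤ) < 2 ^ n := by positivity
  have hpow : 2 ^ (n + 1) = 2 ^ n + 2 ^ n := by ring
  have hpow_pos : 1 ≤ 2 ^ n := Nat.one_le_two_pow
  have hpowℤ : (2 : ℤ) ^ (n + 1) = 2 ^ n + 2 ^ n := by ring
  refine ⟨fun i hi => ?_, fun i hi => ?_⟩ <;> rw [mem_Icc] at hi
  · have htotal := outDegree_add_inDegree (n := n + 1) (mem_Icc.mpr ⟨hi.1, by omega⟩)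
    have hout := outDegree_of_le_two_pow hi.1 hi.2
    exact ⟨hout, show inDegree (n + 1) i = _ by omega⟩
  · have hi1 : 1 ≤ i := by omega
    have htotal := outDegree_add_inDegree (n := n + 1) (mem_Icc.mpr ⟨hi1, hi.2⟩)
    have hout := outDegree_of_two_pow_lt hi.1 hi.2
    exact ⟨hout, show inDegree (n + 1) i = _ by omega⟩
end

section
/- For all n ≥ 0, the tally-sequences of the 2^n vertices of the tournament T_n are pairwise distinct. -/
open scoped Classical

/-- The edge relation of the tournament `T n` on vertices `{1, …, 2^n}`
(represented as `Fin (2^n)`, vertex `i` standing for the number `i+1`):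
an edge from `i` to `j` iff `odd (j - i) ≡ 1 (mod 4)`. -/
def T (n : ℕ) (i j : Fin (2 ^ n)) : Prop :=
  oddPart (((j : ℕ) : ℤ) - ((i : ℕ) : ℤ)) ≡ 1 [ZMOD 4]

/-- The tally of `v` relative to the set `Y` in the digraph with edge relation `E`:
the pair (number of edges from `Y` into `v`, number of edges from `v` into `Y`). -/
noncomputable def relTally {V : Type*} [Fintype V] (E : V → V → Prop) (Y : Finset V) (v : V) :
    ℕ × ℕ :=
  ((Y.filter (fun u => E u v)).card, (Y.filter (fun u => E v u)).card)

/-- `tallyVec E k v` is the list `(t_0^v, …, t_k^v)` of the first `k+1` terms of the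
tally-sequence of `v`. -/
noncomputable def tallyVec {V : Type*} [Fintype V] (E : V → V → Prop) : ℕ → V → List (ℕ × ℕ)
  | 0, v => [relTally E Finset.univ v]
  | k + 1, v =>
      tallyVec E k v ++
        [relTally E (Finset.univ.filter (fun u => tallyVec E k u = tallyVec E k v)) v]

/-- `tallyTerm E k v` is the `k`-th term `t_k^v` of the tally-sequence of `v`. -/
noncomputable def tallyTerm {V : Type*} [Fintype V] (E : V → V → Prop) : ℕ → V → ℕ × ℕ
  | 0, v => relTally E Finset.univ v
  | k + 1, v => relTally E (Finset.univ.filter (fun u => tallyVec E k u = tallyVec E k v)) v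

/-! Whether `i → j` is an edge depends only on `j - i` and is unchanged when `j - i` is
doubled, so `T n` restricted to a dyadic block of `2 ^ (s + 1)` consecutive vertices is a copy
of `T (s + 1)`. Splitting `T (s + 1)` into even and odd vertices shows by induction that the
in-degree of `v` in it is `2 ^ s - 1` or `2 ^ s` according as `v` lies in the lower or the upper
half. Hence, by induction on `k`, two vertices agree on `t_0, …, t_k` iff they lie in the same
dyadic block of size `2 ^ (n - k - 1)`: the new term `t_{k+1}` separates the two halves of each
block. For `k = n - 1` the blocks are singletons.
-/

open Finset

lemma oddPart_of_odd {z : ℤ} (hz : Odd z) : oddPart z = z := by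
  have : z.natAbs.factorization 2 = 0 := Nat.factorization_eq_zero_of_not_dvd <| by
    have := Nat.odd_iff.mp (Int.natAbs_odd.mpr hz)
    omega
  simp [oddPart, this]

lemma oddPart_two_mul (z : ℤ) : oddPart (2 * z) = oddPart z := by
  rcases eq_or_ne z 0 with rfl | hz
  · simp
  have hv : (2 * z).natAbs.factorization 2 = z.natAbs.factorization 2 + 1 := by
    rw [Int.natAbs_mul, Nat.factorization_mul (by norm_num) (by simpa using hz)]
    simp [Nat.Prime.factorization_self Nat.prime_two, add_comm]
  rw [oddPart, oddPart, hv, pow_succ', Int.mul_ediv_mul_of_pos _ _ (by norm_num)]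

lemma two_pow_factorization_dvd (z : ℤ) : (2 : ℤ) ^ z.natAbs.factorization 2 ∣ z := by
  exact_mod_cast Int.ofNat_dvd_left.mpr (Nat.ordProj_dvd z.natAbs 2)

/-- `T n i j` unfolds to `oddEdge i j`; on `ℤ` edges can be translated and rescaled freely. -/
def oddEdge (i j : ℤ) : Prop := oddPart (j - i) ≡ 1 [ZMOD 4]

lemma oddEdge_congr {i j i' j' : ℤ} (h : j - i = j' - i') : oddEdge i j ↔ oddEdge i' j' := by
  rw [oddEdge, oddEdge, h]

lemma oddEdge_irrefl (i : ℤ) : ¬ oddEdge i i := by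
  simp [oddEdge, oddPart, Int.ModEq]

lemma oddEdge_iff_not_oddEdge {i j : ℤ} (h : i ≠ j) : oddEdge i j ↔ ¬ oddEdge j i := by
  obtain ⟨m, hm⟩ := odd_oddPart (sub_ne_zero.mpr h)
  rw [oddEdge, oddEdge, ← neg_sub, oddPart_neg]
  rw [hm]
  simp only [Int.ModEq]
  omega

lemma oddEdge_two_mul (i j : ℤ) : oddEdge (2 * i) (2 * j) ↔ oddEdge i j := by
  rw [oddEdge, oddEdge, ← mul_sub, oddPart_two_mul]

lemma oddEdge_two_mul_add_one (i j : ℤ) : oddEdge (2 * i + 1) (2 * j + 1) ↔ oddEdge i j :=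
  (oddEdge_congr (by ring)).trans (oddEdge_two_mul i j)

lemma oddEdge_iff_of_odd {i j : ℤ} (h : Odd (j - i)) : oddEdge i j ↔ (j - i) % 4 = 1 := by
  rw [oddEdge, oddPart_of_odd h, Int.ModEq]
  rfl

lemma card_filter_range_two_mul (P : ℕ → Prop) [DecidablePred P] (m : ℕ) :
    #{u ∈ range (2 * m) | P u} =
      #{t ∈ range m | P (2 * t)} + #{t ∈ range m | P (2 * t + 1)} := by
  simp only [card_filter]
  induction m with
  | zero => simp
  | succ m ih =>
    rw [show 2 * (m + 1) = 2 * m + 1 + 1 by ring]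
    simp only [sum_range_succ, ih]
    ring

lemma card_filter_range_two_mul_mod_two (m : ℕ) {c : ℕ} (hc : c < 2) :
    #{t ∈ range (2 * m) | t % 2 = c} = m := by
  rw [card_filter_range_two_mul]
  interval_cases c <;> simp

noncomputable def inDegT (s v : ℕ) : ℕ := #{u ∈ range (2 ^ s) | oddEdge (u : ℕ) v}

lemma inDegT_one {v : ℕ} (hv : v < 2) : inDegT 1 v = v := by
  have h10 : ¬ oddEdge 1 0 := by
    rw [oddEdge_iff_of_odd (by decide)]
    decide
  have h01 : oddEdge 0 1 := by
    rw [oddEdge_iff_of_odd (by decide)]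
    decide
  interval_cases v <;>
    simp [inDegT, range_add_one, filter_insert, filter_singleton, oddEdge_irrefl, h10, h01]

/-- Halving preserves odd parts, so the even and the odd vertices each span a copy of `T (s + 1)`;
an edge between the two classes has odd difference, hence exists iff the difference is `1` mod `4`,
which happens for exactly half of the other class. -/
lemma inDegT_succ_succ (s v : ℕ) : inDegT (s + 2) v = inDegT (s + 1) (v / 2) + 2 ^ s := by
  have hcross : ∀ c < 2, #{t ∈ range (2 ^ (s + 1)) | t % 2 = c} = 2 ^ s := fun c hc => by
    rw [pow_succ', card_filter_range_two_mul_mod_two _ hc]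
  rw [inDegT, pow_succ' 2 (s + 1), card_filter_range_two_mul]
  obtain ⟨w, rfl | rfl⟩ := Nat.even_or_odd' v
  · rw [Nat.mul_div_cancel_left w two_pos, ← hcross ((w + 1) % 2) (Nat.mod_lt _ two_pos), inDegT]
    congr 1
    · exact congrArg card <| filter_congr fun t _ => by push_cast; exact oddEdge_two_mul _ _
    · refine congrArg card <| filter_congr fun t _ => ?_
      rw [oddEdge_iff_of_odd (by push_cast; exact ⟨w - t - 1, by ring⟩)]
      omega
  · rw [show (2 * w + 1) / 2 = w by omega, ← hcross (w % 2) (Nat.mod_lt _ two_pos), inDegT,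
      add_comm]
    congr 1
    · exact congrArg card <| filter_congr fun t _ => by
        push_cast
        exact oddEdge_two_mul_add_one _ _
    · refine congrArg card <| filter_congr fun t _ => ?_
      rw [oddEdge_iff_of_odd (by push_cast; exact ⟨w - t, by ring⟩)]
      omega

lemma inDegT_eq (s : ℕ) {v : ℕ} (hv : v < 2 ^ (s + 1)) :
    inDegT (s + 1) v = 2 ^ s - 1 + v / 2 ^ s := by
  induction s generalizing v with
  | zero => simpa using inDegT_one hv
  | succ s ih =>
    have hv2 : v / 2 < 2 ^ (s + 1) := by rw [pow_succ] at hv; omega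
    rw [inDegT_succ_succ, ih hv2, Nat.div_div_eq_div_mul, ← pow_succ']
    have := Nat.one_le_two_pow (n := s)
    rw [pow_succ 2 s]
    omega

lemma relTally_fst_add_snd_add_one {V : Type*} [Fintype V] {E : V → V → Prop}
    (hirr : ∀ v, ¬ E v v) (htot : ∀ u v, u ≠ v → (E u v ↔ ¬ E v u))
    {Y : Finset V} {v : V} (hv : v ∈ Y) :
    (relTally E Y v).1 + (relTally E Y v).2 + 1 = #Y := by
  have hout : {u ∈ Y.erase v | E v u} = {u ∈ Y.erase v | ¬ E u v} :=
    filter_congr fun u hu => by rw [htot u v (ne_of_mem_erase hu), not_not]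
  have herase (P : V → Prop) [DecidablePred P] (hP : ¬ P v) :
      {u ∈ Y | P u} = {u ∈ Y.erase v | P u} := by
    rw [filter_erase, erase_eq_of_notMem (by simp [hP])]
  rw [relTally, herase (E · v) (hirr v), herase (E v ·) (hirr v), hout,
    card_filter_add_card_filter_not, card_erase_add_one hv]

lemma T_irrefl (n : ℕ) (v : Fin (2 ^ n)) : ¬ T n v v := oddEdge_irrefl _

lemma T_iff_not_T {n : ℕ} {u v : Fin (2 ^ n)} (h : u ≠ v) : T n u v ↔ ¬ T n v u :=
  oddEdge_iff_not_oddEdge (by exact_mod_cast Fin.val_ne_of_ne h)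

noncomputable def block (n s : ℕ) (w : Fin (2 ^ n)) : Finset (Fin (2 ^ n)) :=
  {x | (x : ℕ) / 2 ^ s = (w : ℕ) / 2 ^ s}

lemma div_mul_add_lt {n s w t : ℕ} (hs : s ≤ n) (hw : w < 2 ^ n) (ht : t < 2 ^ s) :
    w / 2 ^ s * 2 ^ s + t < 2 ^ n := by
  have h2n : 2 ^ n = 2 ^ (n - s) * 2 ^ s := by rw [← pow_add, Nat.sub_add_cancel hs]
  have hq : w / 2 ^ s < 2 ^ (n - s) := Nat.div_lt_of_lt_mul (by rwa [mul_comm, ← h2n])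
  calc w / 2 ^ s * 2 ^ s + t < (w / 2 ^ s + 1) * 2 ^ s := by rw [add_mul, one_mul]; omega
    _ ≤ 2 ^ (n - s) * 2 ^ s := Nat.mul_le_mul_right _ hq
    _ = 2 ^ n := h2n.symm

lemma card_filter_block {n s : ℕ} (hs : s ≤ n) (w : Fin (2 ^ n))
    (P : ℕ → Prop) [DecidablePred P] :
    #{x ∈ block n s w | P ((x : Fin (2 ^ n)).val % 2 ^ s)} = #{t ∈ range (2 ^ s) | P t} := by
  have hpos : 0 < 2 ^ s := Nat.two_pow_pos s
  refine card_nbij' (fun x : Fin (2 ^ n) => (x : ℕ) % 2 ^ s)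
    (fun t => (⟨w / 2 ^ s * 2 ^ s + t % 2 ^ s, div_mul_add_lt hs w.isLt (Nat.mod_lt _ hpos)⟩ :
      Fin (2 ^ n)))
    ?_ ?_ ?_ ?_
  · intro x hx
    simpa [block] using And.intro (Nat.mod_lt _ hpos) (mem_filter.mp hx).2
  · intro t ht
    simp only [block, coe_filter, mem_range, mem_filter, mem_univ, true_and, Set.mem_ofPred_eq]
      at ht ⊢
    rw [Nat.mod_eq_of_lt ht.1, Nat.mul_add_mod_self_right, Nat.mod_eq_of_lt ht.1, add_comm,
      Nat.add_mul_div_right _ _ hpos, Nat.div_eq_of_lt ht.1, zero_add]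
    exact ⟨rfl, ht.2⟩
  · intro x hx
    simp only [block, coe_filter, mem_filter] at hx
    ext
    simp [← hx.1.2, Nat.div_add_mod']
  · intro t ht
    simp only [coe_filter, mem_range] at ht
    simp [Nat.mod_eq_of_lt ht.1, Nat.mul_add_mod_self_right]

lemma mem_block_self (n s : ℕ) (w : Fin (2 ^ n)) : w ∈ block n s w := by simp [block]

lemma T_iff_oddEdge_mod {n s : ℕ} {w x : Fin (2 ^ n)} (hx : x ∈ block n s w) :
    T n x w ↔ oddEdge ((x : ℕ) % 2 ^ s : ℕ) ((w : ℕ) % 2 ^ s : ℕ) := by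
  have hq : (x : ℕ) / 2 ^ s = (w : ℕ) / 2 ^ s := by simpa [block] using hx
  have hxq := Nat.div_add_mod' (x : ℕ) (2 ^ s)
  have hwq := Nat.div_add_mod' (w : ℕ) (2 ^ s)
  rw [hq] at hxq
  refine oddEdge_congr ?_
  zify at hxq hwq ⊢
  linarith

lemma relTally_block {n s : ℕ} (hs : s + 1 ≤ n) (w : Fin (2 ^ n)) :
    relTally (T n) (block n (s + 1) w) w =
      (2 ^ s - 1 + (w : ℕ) / 2 ^ s % 2, 2 ^ s - (w : ℕ) / 2 ^ s % 2) := by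
  have hin : #{x ∈ block n (s + 1) w | T n x w} = 2 ^ s - 1 + (w : ℕ) / 2 ^ s % 2 := by
    calc #{x ∈ block n (s + 1) w | T n x w}
        = #{x ∈ block n (s + 1) w |
            oddEdge ((x : Fin (2 ^ n)).val % 2 ^ (s + 1) : ℕ) ((w : ℕ) % 2 ^ (s + 1) : ℕ)} :=
          congrArg card (filter_congr fun x hx => T_iff_oddEdge_mod hx)
      _ = inDegT (s + 1) ((w : ℕ) % 2 ^ (s + 1)) :=
          card_filter_block hs w (fun t : ℕ => oddEdge t ((w : ℕ) % 2 ^ (s + 1) : ℕ))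
      _ = 2 ^ s - 1 + (w : ℕ) / 2 ^ s % 2 := by
          rw [inDegT_eq s (Nat.mod_lt _ (Nat.two_pow_pos _)), pow_succ,
            Nat.mod_mul_right_div_self]
  have hcard : #(block n (s + 1) w) = 2 ^ (s + 1) := by
    simpa using card_filter_block hs w (fun _ => True)
  have hsum := relTally_fst_add_snd_add_one (T_irrefl n) (fun _ _ => T_iff_not_T)
    (mem_block_self n (s + 1) w)
  have hb : (w : ℕ) / 2 ^ s % 2 < 2 := Nat.mod_lt _ two_pos
  have := Nat.one_le_two_pow (n := s)
  rw [relTally] at hsum ⊢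
  rw [hin, hcard, pow_succ] at hsum
  rw [hin]
  ext
  · rfl
  · dsimp only at hsum ⊢
    omega

lemma relTally_block_eq_iff {n s : ℕ} (hs : s + 1 ≤ n) (u v : Fin (2 ^ n)) :
    relTally (T n) (block n (s + 1) u) u = relTally (T n) (block n (s + 1) v) v ↔
      (u : ℕ) / 2 ^ s % 2 = (v : ℕ) / 2 ^ s % 2 := by
  have := Nat.one_le_two_pow (n := s)
  have := Nat.mod_lt ((u : ℕ) / 2 ^ s) two_pos
  have := Nat.mod_lt ((v : ℕ) / 2 ^ s) two_pos
  rw [relTally_block hs, relTally_block hs, Prod.ext_iff]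
  omega

lemma Nat.div_two_pow_eq_iff (a b s : ℕ) :
    a / 2 ^ s = b / 2 ^ s ↔
      a / 2 ^ (s + 1) = b / 2 ^ (s + 1) ∧ a / 2 ^ s % 2 = b / 2 ^ s % 2 := by
  rw [pow_succ, ← Nat.div_div_eq_div_mul, ← Nat.div_div_eq_div_mul]
  omega

lemma tallyVec_zero_eq_iff {V : Type*} [Fintype V] (E : V → V → Prop) (u v : V) :
    tallyVec E 0 u = tallyVec E 0 v ↔ tallyTerm E 0 u = tallyTerm E 0 v :=
  List.singleton_inj

lemma tallyVec_succ_eq_iff {V : Type*} [Fintype V] (E : V → V → Prop) (k : ℕ) (u v : V) :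
    tallyVec E (k + 1) u = tallyVec E (k + 1) v ↔
      tallyVec E k u = tallyVec E k v ∧ tallyTerm E (k + 1) u = tallyTerm E (k + 1) v := by
  refine ⟨fun h => ?_, fun ⟨h₁, h₂⟩ => congrArg₂ (· ++ [·]) h₁ h₂⟩
  obtain ⟨h₁, h₂⟩ := List.append_inj' h rfl
  exact ⟨h₁, List.singleton_inj.mp h₂⟩

lemma tallyVec_eq_of_tallyTerm_eq {V : Type*} [Fintype V] {E : V → V → Prop} {u v : V}
    (h : ∀ k, tallyTerm E k u = tallyTerm E k v) (k : ℕ) : tallyVec E k u = tallyVec E k v := by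
  induction k with
  | zero => exact (tallyVec_zero_eq_iff E u v).mpr (h 0)
  | succ k ih => exact (tallyVec_succ_eq_iff E k u v).mpr ⟨ih, h (k + 1)⟩

lemma tallyVec_T_eq_iff {n : ℕ} (k s : ℕ) (hn : k + s + 1 = n) (u v : Fin (2 ^ n)) :
    tallyVec (T n) k u = tallyVec (T n) k v ↔ (u : ℕ) / 2 ^ s = (v : ℕ) / 2 ^ s := by
  induction k generalizing s u v with
  | zero =>
    have hdiv (x : Fin (2 ^ n)) : (x : ℕ) / 2 ^ (s + 1) = 0 :=
      Nat.div_eq_of_lt (x.isLt.trans_eq (by rw [← hn, zero_add]))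
    have hterm (w : Fin (2 ^ n)) : tallyTerm (T n) 0 w = relTally (T n) (block n (s + 1) w) w := by
      have hblock : block n (s + 1) w = univ := by
        ext x
        simp [block, hdiv]
      rw [hblock]
      rfl
    rw [tallyVec_zero_eq_iff, hterm, hterm, relTally_block_eq_iff (by omega),
      Nat.div_two_pow_eq_iff _ _ s, hdiv, hdiv, eq_self, true_and]
  | succ k ih =>
    have hterm (w : Fin (2 ^ n)) :
        tallyTerm (T n) (k + 1) w = relTally (T n) (block n (s + 1) w) w :=
      congrArg (relTally (T n) · w) (filter_congr fun x _ => ih (s + 1) (by omega) x w)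
    rw [tallyVec_succ_eq_iff, ih (s + 1) (by omega), hterm, hterm,
      relTally_block_eq_iff (by omega), Nat.div_two_pow_eq_iff _ _ s]

/-- The tally-sequences of the vertices of the tournament `T n` are pairwise distinct. -/
theorem stmt_10 (n : ℕ) (u v : Fin (2 ^ n))
    (h : ∀ k : ℕ, tallyTerm (T n) k u = tallyTerm (T n) k v) : u = v := by
  rcases n with _ | m
  · exact Subsingleton.elim (α := Fin 1) u v
  · have hdiv := (tallyVec_T_eq_iff m 0 rfl u v).mp (tallyVec_eq_of_tallyTerm_eq h m)
    exact Fin.ext (by simpa using hdiv)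
end

section
/- Let 1 ≤ n < m, let G be the digraph with adjacency matrix M_{m,n} with w,x,y,z ∈ {0,1}, let u ∈ {1,…,2^m} and v ∈ {2^m+1,…,2^m+2^n}. Then τ(u) = τ(v) if and only if both: (i) either u ∈ {1,…,2^(m−1)} and v ∈ {2^m+1,…,2^m+2^(n−1)}, or u ∈ {2^(m−1)+1,…,2^m} and v ∈ {2^m+2^(n−1)+1,…,2^m+2^n}; and (ii) y + z = 1 and w + x = 1. -/
open scoped Classical

/-- The edge relation, on vertices `{1, …, 2^m + 2^n}`, of the digraph whose adjacency
matrix is `M_{m,n}` with parameter values `w, x, y, z ∈ {0,1}`:  the two diagonal blocks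
are the tournaments `T m` and `T n`, the top-right block alternates `w`/`x` and the
bottom-left block alternates `y`/`z` according to the parity of `i + j`. -/
def stockEdge (m n w x y z : ℕ) (i j : ℤ) : Prop :=
  if i ≤ 2 ^ m ∧ j ≤ 2 ^ m then Dominates i j
  else if 2 ^ m < i ∧ 2 ^ m < j then Dominates i j
  else if i ≤ 2 ^ m then (if Even (i + j) then w = 1 else x = 1)
  else (if Even (i + j) then y = 1 else z = 1)

/-- In-degree of the vertex `v` in the digraph with adjacency matrix `M_{m,n}`. -/
noncomputable def sIn (m n w x y z : ℕ) (v : ℤ) : ℕ :=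
  ((Finset.Icc (1 : ℤ) (2 ^ m + 2 ^ n)).filter (fun u => stockEdge m n w x y z u v)).card

/-- Out-degree of the vertex `v` in the digraph with adjacency matrix `M_{m,n}`. -/
noncomputable def sOut (m n w x y z : ℕ) (v : ℤ) : ℕ :=
  ((Finset.Icc (1 : ℤ) (2 ^ m + 2 ^ n)).filter (fun u => stockEdge m n w x y z v u)).card

/-- The tally (in-degree, out-degree) of `v` in the digraph with adjacency matrix `M_{m,n}`. -/
noncomputable def sTally (m n w x y z : ℕ) (v : ℤ) : ℕ × ℕ :=
  (sIn m n w x y z v, sOut m n w x y z v)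

/-!
`Dominates i j` says that `j - i` lies in the set `F` of integers whose odd part is `1 mod 4`,
so each diagonal block of `M_{m,n}` is a circulant tournament on `2^k` consecutive integers.
The sets `F` and `-F` partition the nonzero integers, and `F` is invariant under translation by
`2^k` except at `±2^(k-1)` (where `2^(k-1) ∈ F` and `-2^(k-1) ∉ F`). Hence a window of `2^k`
consecutive integers around `0` meets `F` in `2^(k-1)` points, or one fewer when it contains
`-2^(k-1)`. So inside its block a vertex of the lower half has in-degree `2^(k-1) - 1` and
out-degree `2^(k-1)`, and the upper half the reverse. The off-diagonal blocks alternate with the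
parity of `i + j`, and contribute `(y + z)` or `(w + x)` times half the other block. Adding
in- and out-degrees gives `(w + x + y + z - 2) (2^(m-1) - 2^(n-1)) = 0`, and then the in-degrees
force `y + z = 1` and that `u` and `v` lie in corresponding halves.
-/

open Finset

theorem oddPart_two_pow_mul_s13 (a : ℕ) {o : ℤ} (ho : Odd o) : oddPart (2 ^ a * o) = o := by
  have ho0 : o.natAbs ≠ 0 := by rintro h; simp_all
  have hv : (2 ^ a * o.natAbs).factorization 2 = a := by
    rw [Nat.factorization_mul (by positivity) ho0, Nat.Prime.factorization_pow Nat.prime_two]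
    simp [Nat.factorization_eq_zero_of_not_dvd, ← even_iff_two_dvd, Int.natAbs_even, ho]
  rw [oddPart, Int.natAbs_mul, Int.natAbs_pow, show Int.natAbs 2 = 2 from rfl, hv]
  exact Int.mul_ediv_cancel_left _ (by positivity)

theorem Int.exists_eq_two_pow_mul_odd {d : ℤ} (hd : d ≠ 0) : ∃ a o, Odd o ∧ d = 2 ^ a * o := by
  obtain ⟨o, hdo, ho⟩ :=
    (Int.finiteMultiplicity_iff.mpr ⟨by norm_num, hd⟩ :
      FiniteMultiplicity (2 : ℤ) d).exists_eq_pow_mul_and_not_dvd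
  exact ⟨_, o, Int.not_even_iff_odd.mp (by rwa [even_iff_two_dvd]), hdo⟩

def IsForward (d : ℤ) : Prop := oddPart d ≡ 1 [ZMOD 4]

theorem dominates_iff_isForward {i j : ℤ} : Dominates i j ↔ IsForward (j - i) := Iff.rfl

theorem isForward_two_pow_mul (a : ℕ) {o : ℤ} (ho : Odd o) :
    IsForward (2 ^ a * o) ↔ o ≡ 1 [ZMOD 4] := by
  rw [IsForward, oddPart_two_pow_mul_s13 a ho]

theorem not_isForward_zero : ¬ IsForward 0 := by
  simp [IsForward, oddPart, Int.ModEq]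

theorem isForward_two_pow (k : ℕ) : IsForward (2 ^ k) := by
  simpa using isForward_two_pow_mul k odd_one

theorem isForward_neg {d : ℤ} (hd : d ≠ 0) : IsForward (-d) ↔ ¬ IsForward d := by
  obtain ⟨a, o, ho, rfl⟩ := Int.exists_eq_two_pow_mul_odd hd
  rw [← mul_neg, isForward_two_pow_mul a ho.neg, isForward_two_pow_mul a ho]
  obtain ⟨c, rfl⟩ := ho
  simp only [Int.ModEq]
  omega

theorem isForward_sub_two_pow {k : ℕ} {e : ℤ} (he0 : 0 < e) (hek : e < 2 ^ k) :
    IsForward (e - 2 ^ k) ↔ e ≠ 2 ^ (k - 1) ∧ IsForward e := by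
  have hk : k ≠ 0 := by rintro rfl; omega
  have hkpow : (2 : ℤ) ^ k = 2 * 2 ^ (k - 1) := (mul_pow_sub_one hk 2).symm
  by_cases hc : e = 2 ^ (k - 1)
  · rw [hc, hkpow, show (2 : ℤ) ^ (k - 1) - 2 * 2 ^ (k - 1) = -2 ^ (k - 1) by ring,
      isForward_neg (by positivity)]
    simp [isForward_two_pow]
  rw [and_iff_right hc]
  obtain ⟨a, o, ho, rfl⟩ := Int.exists_eq_two_pow_mul_odd he0.ne'
  -- `e ≠ 2 ^ (k - 1)` forces `4 * 2 ^ a ∣ 2 ^ k`, so subtracting `2 ^ k` keeps `o mod 4`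
  have hak : a + 2 ≤ k := by
    have hopos : 0 < o := pos_of_mul_pos_right he0 (by positivity)
    by_contra! h
    rcases Nat.lt_or_ge a k with hlt | hge
    · obtain rfl : a = k - 1 := by omega
      have : o < 2 := by nlinarith [pow_pos (two_pos (α := ℤ)) (k - 1)]
      obtain rfl : o = 1 := by omega
      simp at hc
    · nlinarith [pow_le_pow_right₀ (by norm_num : (1 : ℤ) ≤ 2) hge]
  obtain ⟨b, rfl⟩ := Nat.exists_eq_add_of_le hak
  have hsub : 2 ^ a * o - 2 ^ (a + 2 + b) = 2 ^ a * (o - 4 * 2 ^ b) := by ring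
  rw [hsub, isForward_two_pow_mul a (ho.sub_even ⟨2 * 2 ^ b, by ring⟩),
    isForward_two_pow_mul a ho]
  simp [Int.ModEq, Int.sub_emod]

theorem card_filter_Ico_add_card_filter_Ico {α : Type*} [LinearOrder α] [LocallyFiniteOrder α]
    (P : α → Prop) [DecidablePred P] {a b c : α} (hab : a ≤ b) (hbc : b ≤ c) :
    #{d ∈ Ico a b | P d} + #{d ∈ Ico b c | P d} = #{d ∈ Ico a c | P d} := by
  rw [← card_union_of_disjoint (disjoint_filter_filter (Ico_disjoint_Ico_consecutive a b c)),
    ← filter_union, Ico_union_Ico_eq_Ico hab hbc]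

theorem card_filter_Ico_sub_right (P : ℤ → Prop) (a b c : ℤ) :
    #{i ∈ Ico a b | P (i - c)} = #{d ∈ Ico (a - c) (b - c) | P d} :=
  card_equiv (Equiv.subRight c) fun i => by simp

theorem card_filter_Ico_sub_left (P : ℤ → Prop) (a b c : ℤ) :
    #{i ∈ Ico a b | P (c - i)} = #{d ∈ Ico (c - b + 1) (c - a + 1) | P d} :=
  card_equiv (Equiv.subLeft c) fun i => by
    simp only [mem_filter, mem_Ico, Equiv.subLeft_apply]
    exact and_congr_left fun _ => by omega

section Window

variable {k : ℕ}

theorem card_isForward_Ico_sub_two_pow_add_ite (hk : 1 ≤ k) {t : ℤ} (ht : 0 < t) :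
    #{d ∈ Ico (t - 2 ^ k) 0 | IsForward d} + (if t ≤ 2 ^ (k - 1) then 1 else 0)
      = #{e ∈ Ico t (2 ^ k) | IsForward e} := by
  have hkpow : (2 : ℤ) ^ k = 2 * 2 ^ (k - 1) := (mul_pow_sub_one (by omega) 2).symm
  have hpos : (0 : ℤ) < 2 ^ (k - 1) := by positivity
  have hshift : #{d ∈ Ico (t - 2 ^ k) 0 | IsForward d}
      = #(({e ∈ Ico t (2 ^ k) | IsForward e}).erase (2 ^ (k - 1))) := by
    rw [← sub_self ((2 : ℤ) ^ k), ← card_filter_Ico_sub_right]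
    congr 1
    ext e
    simp only [mem_filter, mem_Ico, mem_erase]
    constructor
    · rintro ⟨he, hF⟩
      have := (isForward_sub_two_pow (by omega) he.2).mp hF
      exact ⟨this.1, he, this.2⟩
    · rintro ⟨hne, he, hF⟩
      exact ⟨he, (isForward_sub_two_pow (by omega) he.2).mpr ⟨hne, hF⟩⟩
  rw [hshift]
  split_ifs with htc
  · exact card_erase_add_one (mem_filter.mpr ⟨mem_Ico.mpr ⟨htc, by omega⟩, isForward_two_pow _⟩)
  · rw [erase_eq_of_notMem (fun h => htc (mem_Ico.mp (mem_filter.mp h).1).1), add_zero]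

theorem card_isForward_Ico_zero_two_pow (hk : 1 ≤ k) :
    #{d ∈ Ico 0 (2 ^ k) | IsForward d} = 2 ^ (k - 1) := by
  have hkpow : (2 : ℕ) ^ k = 2 * 2 ^ (k - 1) := (mul_pow_sub_one (by omega) 2).symm
  have hzero : {d ∈ Ico (0 : ℤ) (2 ^ k) | IsForward d} = {d ∈ Ico 1 (2 ^ k) | IsForward d} := by
    ext d
    simp only [mem_filter, mem_Ico]
    have : IsForward d → d ≠ 0 := by rintro h rfl; exact not_isForward_zero h
    constructor <;> rintro ⟨⟨h1, h2⟩, hF⟩ <;> have := this hF <;> exact ⟨⟨by omega, h2⟩, hF⟩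
  -- on `[1, 2^k)`, negation and the shift at `t = 1` give `#¬F + 1 = #F`
  have hneg : #{e ∈ Ico (1 : ℤ) (2 ^ k) | ¬ IsForward e}
      = #{d ∈ Ico (1 - 2 ^ k) 0 | IsForward d} := by
    rw [filter_congr (q := fun e => IsForward (0 - e)) fun e he => by
      rw [zero_sub, isForward_neg (by simp at he; omega)], card_filter_Ico_sub_left]
    ring_nf
  have hshift := card_isForward_Ico_sub_two_pow_add_ite hk one_pos
  rw [if_pos (one_le_pow₀ (by norm_num))] at hshift
  have hsplit : #{e ∈ Ico (1 : ℤ) (2 ^ k) | IsForward e}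
      + #{e ∈ Ico (1 : ℤ) (2 ^ k) | ¬ IsForward e} = #(Ico (1 : ℤ) (2 ^ k)) :=
    card_filter_add_card_filter_not _
  have hcard : #(Ico (1 : ℤ) (2 ^ k)) = 2 ^ k - 1 := by
    rw [Int.card_Ico, show (2 : ℤ) ^ k = ((2 ^ k : ℕ) : ℤ) by push_cast; rfl]
    omega
  rw [hzero]
  omega

theorem card_isForward_Ico_window (hk : 1 ≤ k) {t : ℤ} (ht0 : 0 < t) (htk : t ≤ 2 ^ k) :
    #{d ∈ Ico (t - 2 ^ k) t | IsForward d} + (if t ≤ 2 ^ (k - 1) then 1 else 0)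
      = 2 ^ (k - 1) := by
  rw [← card_isForward_Ico_zero_two_pow hk,
    ← card_filter_Ico_add_card_filter_Ico _ (by omega : t - 2 ^ k ≤ 0) ht0.le,
    ← card_filter_Ico_add_card_filter_Ico _ ht0.le htk,
    ← card_isForward_Ico_sub_two_pow_add_ite hk ht0]
  ring

theorem card_Ico_dominating (hk : 1 ≤ k) {lo u : ℤ} (hlo : lo ≤ u) (hu : u < lo + 2 ^ k) :
    #{i ∈ Ico lo (lo + 2 ^ k) | Dominates i u} + (if u < lo + 2 ^ (k - 1) then 1 else 0)
      = 2 ^ (k - 1) := by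
  have h := card_isForward_Ico_window hk (t := u - lo + 1) (by omega) (by omega)
  rw [show u - lo + 1 - 2 ^ k = u - (lo + 2 ^ k) + 1 by ring, ← card_filter_Ico_sub_left] at h
  rw [← h]
  exact congrArg _ (if_congr (by omega) rfl rfl)

theorem card_Ico_dominated (hk : 1 ≤ k) {lo u : ℤ} (hlo : lo ≤ u) (hu : u < lo + 2 ^ k) :
    #{j ∈ Ico lo (lo + 2 ^ k) | Dominates u j} + 1
      = 2 ^ (k - 1) + (if u < lo + 2 ^ (k - 1) then 1 else 0) := by
  have hkpow : (2 : ℤ) ^ k = 2 * 2 ^ (k - 1) := (mul_pow_sub_one (by omega) 2).symm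
  have h := card_isForward_Ico_window hk (t := lo + 2 ^ k - u) (by omega) (by omega)
  rw [show lo + 2 ^ k - u - 2 ^ k = lo - u by ring, ← card_filter_Ico_sub_right] at h
  simp only [dominates_iff_isForward]
  split_ifs at h ⊢ <;> omega

end Window

theorem card_Ico_even_add (u a : ℤ) (N : ℕ) : #{j ∈ Ico a (a + 2 * N) | Even (j + u)} = N := by
  induction N with
  | zero => simp
  | succ N ih =>
    have hpair : #{j ∈ Ico (a + 2 * N) (a + 2 * (N + 1 : ℕ)) | Even (j + u)} = 1 := by
      rw [show Ico (a + 2 * N) (a + 2 * (N + 1 : ℕ)) = {a + 2 * N, a + 2 * N + 1} by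
        ext; simp only [mem_Ico, mem_insert, mem_singleton]; push_cast; omega]
      have hsucc : Even (a + 2 * N + 1 + u) ↔ ¬ Even (a + 2 * N + u) := by
        rw [add_right_comm, Int.even_add_one]
      by_cases h : Even (a + 2 * N + u) <;> simp [filter_insert, filter_singleton, h, hsucc]
    rw [← card_filter_Ico_add_card_filter_Ico _ (b := a + 2 * N) (by omega) (by push_cast; omega),
      ih, hpair]

theorem card_Ico_ite_even_add (u a : ℤ) (N : ℕ) {p q : ℕ} (hp : p ≤ 1) (hq : q ≤ 1) :
    #{j ∈ Ico a (a + 2 * N) | if Even (j + u) then p = 1 else q = 1} = (p + q) * N := by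
  have hcard : #(Ico a (a + 2 * N)) = 2 * N := by rw [Int.card_Ico]; omega
  have heven := card_Ico_even_add u a N
  have hodd : #{j ∈ Ico a (a + 2 * N) | ¬ Even (j + u)} = N := by
    have := card_filter_add_card_filter_not (s := Ico a (a + 2 * N)) (fun j => Even (j + u))
    omega
  simp only [Int.not_even_iff_odd] at hodd
  interval_cases p <;> interval_cases q <;> simp [heven, hodd, hcard]

section Degrees

variable {m n w x y z : ℕ} {i j : ℤ}

theorem stockEdge_iff_of_le_of_le (hi : i ≤ 2 ^ m) (hj : j ≤ 2 ^ m) :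
    stockEdge m n w x y z i j ↔ Dominates i j := by
  simp [stockEdge, hi, hj]

theorem stockEdge_iff_of_lt_of_lt (hi : 2 ^ m < i) (hj : 2 ^ m < j) :
    stockEdge m n w x y z i j ↔ Dominates i j := by
  simp [stockEdge, hi, hj, hi.not_ge]

theorem stockEdge_iff_of_le_of_lt (hi : i ≤ 2 ^ m) (hj : 2 ^ m < j) :
    stockEdge m n w x y z i j ↔ if Even (i + j) then w = 1 else x = 1 := by
  simp [stockEdge, hi, hj, hj.not_ge]

theorem stockEdge_iff_of_lt_of_le (hi : 2 ^ m < i) (hj : j ≤ 2 ^ m) :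
    stockEdge m n w x y z i j ↔ if Even (i + j) then y = 1 else z = 1 := by
  simp [stockEdge, hi, hj, hi.not_ge]

theorem card_filter_Icc_eq_add (P : ℤ → Prop) :
    #{i ∈ Icc 1 (2 ^ m + 2 ^ n) | P i}
      = #{i ∈ Ico 1 (1 + 2 ^ m) | P i} + #{i ∈ Ico (1 + 2 ^ m) (1 + 2 ^ m + 2 ^ n) | P i} := by
  rw [card_filter_Ico_add_card_filter_Ico _ (le_add_of_nonneg_right (by positivity))
    (le_add_of_nonneg_right (by positivity))]
  congr 2
  ext
  simp only [mem_Icc, mem_Ico]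
  omega

theorem sIn_add_ite_of_le (hm : 1 ≤ m) (hn : 1 ≤ n) (hy : y ≤ 1) (hz : z ≤ 1) {u : ℤ}
    (hu1 : 1 ≤ u) (hu : u ≤ 2 ^ m) :
    sIn m n w x y z u + (if u < 1 + 2 ^ (m - 1) then 1 else 0)
      = 2 ^ (m - 1) + (y + z) * 2 ^ (n - 1) := by
  have hA := card_Ico_dominating hm hu1 (by omega : u < 1 + 2 ^ m)
  have hB := card_Ico_ite_even_add u (1 + 2 ^ m) (2 ^ (n - 1)) hy hz
  push_cast at hB
  rw [mul_pow_sub_one (by omega)] at hB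
  rw [sIn, card_filter_Icc_eq_add,
    filter_congr (s := Ico 1 (1 + 2 ^ m)) fun i hi =>
      stockEdge_iff_of_le_of_le (by rw [mem_Ico] at hi; omega) hu,
    filter_congr (s := Ico (1 + 2 ^ m) (1 + 2 ^ m + 2 ^ n)) fun j hj =>
      stockEdge_iff_of_lt_of_le (by rw [mem_Ico] at hj; omega) hu]
  omega

theorem sOut_add_one_of_le (hm : 1 ≤ m) (hn : 1 ≤ n) (hw : w ≤ 1) (hx : x ≤ 1) {u : ℤ}
    (hu1 : 1 ≤ u) (hu : u ≤ 2 ^ m) :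
    sOut m n w x y z u + 1
      = 2 ^ (m - 1) + (if u < 1 + 2 ^ (m - 1) then 1 else 0) + (w + x) * 2 ^ (n - 1) := by
  have hA := card_Ico_dominated hm hu1 (by omega : u < 1 + 2 ^ m)
  have hB := card_Ico_ite_even_add u (1 + 2 ^ m) (2 ^ (n - 1)) hw hx
  push_cast at hB
  rw [mul_pow_sub_one (by omega)] at hB
  rw [sOut, card_filter_Icc_eq_add,
    filter_congr (s := Ico 1 (1 + 2 ^ m)) fun i hi =>
      stockEdge_iff_of_le_of_le hu (by rw [mem_Ico] at hi; omega),
    filter_congr (s := Ico (1 + 2 ^ m) (1 + 2 ^ m + 2 ^ n)) fun j hj => by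
      rw [stockEdge_iff_of_le_of_lt hu (by rw [mem_Ico] at hj; omega), add_comm]]
  omega

theorem sIn_add_ite_of_lt (hm : 1 ≤ m) (hn : 1 ≤ n) (hw : w ≤ 1) (hx : x ≤ 1) {v : ℤ}
    (hv1 : 2 ^ m < v) (hv : v ≤ 2 ^ m + 2 ^ n) :
    sIn m n w x y z v + (if v < 1 + 2 ^ m + 2 ^ (n - 1) then 1 else 0)
      = (w + x) * 2 ^ (m - 1) + 2 ^ (n - 1) := by
  have hA := card_Ico_ite_even_add v 1 (2 ^ (m - 1)) hw hx
  have hB := card_Ico_dominating hn (by omega : 1 + 2 ^ m ≤ v) (by omega : v < 1 + 2 ^ m + 2 ^ n)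
  push_cast at hA
  rw [mul_pow_sub_one (by omega)] at hA
  rw [sIn, card_filter_Icc_eq_add,
    filter_congr (s := Ico 1 (1 + 2 ^ m)) fun i hi =>
      stockEdge_iff_of_le_of_lt (by rw [mem_Ico] at hi; omega) hv1,
    filter_congr (s := Ico (1 + 2 ^ m) (1 + 2 ^ m + 2 ^ n)) fun j hj =>
      stockEdge_iff_of_lt_of_lt (by rw [mem_Ico] at hj; omega) hv1]
  omega

theorem sOut_add_one_of_lt (hm : 1 ≤ m) (hn : 1 ≤ n) (hy : y ≤ 1) (hz : z ≤ 1) {v : ℤ}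
    (hv1 : 2 ^ m < v) (hv : v ≤ 2 ^ m + 2 ^ n) :
    sOut m n w x y z v + 1
      = (y + z) * 2 ^ (m - 1) + 2 ^ (n - 1) + (if v < 1 + 2 ^ m + 2 ^ (n - 1) then 1 else 0) := by
  have hA := card_Ico_ite_even_add v 1 (2 ^ (m - 1)) hy hz
  have hB := card_Ico_dominated hn (by omega : 1 + 2 ^ m ≤ v) (by omega : v < 1 + 2 ^ m + 2 ^ n)
  push_cast at hA
  rw [mul_pow_sub_one (by omega)] at hA
  rw [sOut, card_filter_Icc_eq_add,
    filter_congr (s := Ico 1 (1 + 2 ^ m)) fun i hi => by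
      rw [stockEdge_iff_of_lt_of_le hv1 (by rw [mem_Ico] at hi; omega), add_comm],
    filter_congr (s := Ico (1 + 2 ^ m) (1 + 2 ^ m + 2 ^ n)) fun j hj =>
      stockEdge_iff_of_lt_of_lt hv1 (by rw [mem_Ico] at hj; omega)]
  omega

end Degrees

theorem degrees_eq_iff {M N r s a b inU outU inV outV : ℕ} (hN : 1 ≤ N) (hNM : N < M)
    (hr : r ≤ 2) (hs : s ≤ 2) (ha : a ≤ 1) (hb : b ≤ 1)
    (hinU : inU + a = M + s * N) (houtU : outU + 1 = M + a + r * N)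
    (hinV : inV + b = r * M + N) (houtV : outV + 1 = s * M + N + b) :
    inU = inV ∧ outU = outV ↔ a = b ∧ s = 1 ∧ r = 1 := by
  interval_cases r <;> interval_cases s <;> omega

theorem stmt_13 (m n w x y z : ℕ) (hn : 1 ≤ n) (hnm : n < m)
    (hw : w ≤ 1) (hx : x ≤ 1) (hy : y ≤ 1) (hz : z ≤ 1)
    (u v : ℤ) (hu : u ∈ Finset.Icc (1 : ℤ) (2 ^ m))
    (hv : v ∈ Finset.Icc ((2 : ℤ) ^ m + 1) (2 ^ m + 2 ^ n)) :
    sTally m n w x y z u = sTally m n w x y z v ↔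
      (((u ∈ Finset.Icc (1 : ℤ) (2 ^ (m - 1)) ∧
          v ∈ Finset.Icc ((2 : ℤ) ^ m + 1) (2 ^ m + 2 ^ (n - 1))) ∨
        (u ∈ Finset.Icc ((2 : ℤ) ^ (m - 1) + 1) (2 ^ m) ∧
          v ∈ Finset.Icc ((2 : ℤ) ^ m + 2 ^ (n - 1) + 1) (2 ^ m + 2 ^ n))) ∧
       (y + z = 1 ∧ w + x = 1)) := by
  rw [Finset.mem_Icc] at hu hv
  have hm : 1 ≤ m := by omega
  rw [sTally, sTally, Prod.mk.injEq,
    degrees_eq_iff Nat.one_le_two_pow (Nat.pow_lt_pow_right (by norm_num) (by omega))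
      (by omega) (by omega) (by split_ifs <;> omega) (by split_ifs <;> omega)
      (sIn_add_ite_of_le hm hn hy hz hu.1 hu.2) (sOut_add_one_of_le hm hn hw hx hu.1 hu.2)
      (sIn_add_ite_of_lt hm hn hw hx (by omega) hv.2)
      (sOut_add_one_of_lt hm hn hy hz (by omega) hv.2)]
  have hmpow : (2 : ℤ) ^ m = 2 * 2 ^ (m - 1) := (mul_pow_sub_one (by omega) 2).symm
  have hnpow : (2 : ℤ) ^ n = 2 * 2 ^ (n - 1) := (mul_pow_sub_one (by omega) 2).symm
  simp only [Finset.mem_Icc]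
  refine and_congr_left' ?_
  split_ifs <;> simp only [false_iff, true_iff] <;> omega
end
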